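/- The Gray map Φ extended coordinatewise to R^n is a distance-preserving map from (R^n, Lee distance) to (Z_2^{4n}, Hamming distance): for all x, y in R^n, d_L(x, y) = d_H(Φ(x), Φ(y)). -/
import Mathlib


/-- beta(c): the second digit of the 2-adic expansion c = alpha(c) + 2*beta(c). -/
def betaM (c : ZMod 4) : ZMod 2 := if 2 <= c.val then 1 else 0

/-- gamma(c), defined by alpha(c) + beta(c) + gamma(c) = 0 in ZMod 2. -/
def gammaM (c : ZMod 4) : ZMod 2 := (c.val : ZMod 2) + betaM c

/-- The Gray map on an element a + u*b of R = Z4[u]/(u^2), represented by the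
unique pair of coefficients (a, b) : ZMod 4 x ZMod 4. -/
def PhiP (p : ZMod 4 × ZMod 4) : Fin 4 → ZMod 2 :=
  ![betaM p.2, gammaM p.2, betaM (p.1 + p.2), gammaM (p.1 + p.2)]

/-- The Lee weight on ZMod 4: w_L(c) = min(c, 4 - c). -/
def leeW4 (c : ZMod 4) : ℕ := min c.val (4 - c.val)

/-- The Lee weight of a + u*b in R = Z4[u]/(u^2): w_L(b) + w_L(a+b). -/
def leeR (p : ZMod 4 × ZMod 4) : ℕ := leeW4 p.2 + leeW4 (p.1 + p.2)

lemma key (a b : ZMod 4 × ZMod 4) :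
    leeR (a - b) = (Finset.univ.filter (fun j : Fin 4 => PhiP a j ≠ PhiP b j)).card := by
  revert a b; decide

/-- The Gray map, extended coordinatewise to R^n (elements of R represented by
their coefficient pairs), is distance preserving from (R^n, Lee distance) to
(Z2^(4n), Hamming distance). -/
theorem gray_map_distance_preserving (n : ℕ) (x y : Fin n → ZMod 4 × ZMod 4) :
    ∑ i, leeR (x i - y i) =
      (Finset.univ.filter
        (fun p : Fin n × Fin 4 => PhiP (x p.1) p.2 ≠ PhiP (y p.1) p.2)).card := by
  rw [Finset.card_filter, Fintype.sum_prod_type]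
  refine Finset.sum_congr rfl fun i _ => ?_
  rw [show (∑ j : Fin 4, if PhiP (x i) j ≠ PhiP (y i) j then 1 else 0) =
      (Finset.univ.filter (fun j : Fin 4 => PhiP (x i) j ≠ PhiP (y i) j)).card from
    (Finset.card_filter _ _).symm]
  exact key (x i) (y i)
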